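/- Let G be a group such that for every element g ∈ G of infinite order the centraliser of g in G is amenable. Suppose H₁ and H₂ are subgroups of G that commute elementwise (i.e., h₁h₂ = h₂h₁ for all h₁ ∈ H₁, h₂ ∈ H₂) and suppose H₁ contains an element of infinite order. Then H₂ is amenable. -/

import Mathlib

/-!
Since `H₂` commutes with an element `h ∈ H₁` of infinite order, `H₂` lies in the amenable group
`C_G(h)`, so it suffices that subgroups of amenable groups are amenable. For `K ≤ C`, fix a right
transversal `T` of `K` and write `c = k(c) t(c)` with `k(c) ∈ K`, `t(c) ∈ T`; then `k(k'c) = k' k(c)`,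
so `f ↦ m(f ∘ k)` is a left-invariant mean on `K` whenever `m` is one on `C`.
-/

/-- A real-valued function on a group is bounded. -/
def IsBoundedFun {G : Type*} (f : G → ℝ) : Prop :=
  ∃ M : ℝ, ∀ x : G, |f x| ≤ M

/-- A group `G` is amenable if there is a left-invariant mean on the bounded
functions `B(G,ℝ)`: a linear, `G`-invariant map `m` with
`inf f ≤ m f ≤ sup f` for every bounded `f`. -/
def IsAmenable (G : Type*) [Group G] : Prop :=
  ∃ m : (G → ℝ) → ℝ,
    (∀ f g : G → ℝ, IsBoundedFun f → IsBoundedFun g → m (f + g) = m f + m g) ∧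
    (∀ (c : ℝ) (f : G → ℝ), IsBoundedFun f → m (c • f) = c * m f) ∧
    (∀ (g : G) (f : G → ℝ), IsBoundedFun f → m (fun x => f (g⁻¹ * x)) = m f) ∧
    (∀ f : G → ℝ, IsBoundedFun f → sInf (Set.range f) ≤ m f ∧ m f ≤ sSup (Set.range f))

theorem IsBoundedFun.comp {α β : Type*} {f : β → ℝ} (hf : IsBoundedFun f) (σ : α → β) :
    IsBoundedFun (f ∘ σ) :=
  let ⟨M, hM⟩ := hf
  ⟨M, fun x => hM (σ x)⟩

theorem IsBoundedFun.bddBelow {α : Type*} {f : α → ℝ} (hf : IsBoundedFun f) :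
    BddBelow (Set.range f) :=
  let ⟨M, hM⟩ := hf
  ⟨-M, by rintro _ ⟨x, rfl⟩; exact neg_le_of_abs_le (hM x)⟩

theorem IsBoundedFun.bddAbove {α : Type*} {f : α → ℝ} (hf : IsBoundedFun f) :
    BddAbove (Set.range f) :=
  let ⟨M, hM⟩ := hf
  ⟨M, by rintro _ ⟨x, rfl⟩; exact le_of_abs_le (hM x)⟩

theorem IsAmenable.of_equivariant {H C : Type*} [Group H] [Group C] (ψ : H → C) (σ : C → H)
    (hσ : ∀ g c, σ (ψ g * c) = g * σ c) (hC : IsAmenable C) : IsAmenable H := by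
  obtain ⟨m, m_add, m_smul, m_translate, m_bounds⟩ := hC
  refine ⟨fun f => m (f ∘ σ), ?_, ?_, ?_, ?_⟩
  · intro f f' hf hf'
    exact m_add _ _ (hf.comp σ) (hf'.comp σ)
  · intro c f hf
    exact m_smul c _ (hf.comp σ)
  · intro g f hf
    have hshift : (fun x => f (g⁻¹ * x)) ∘ σ = fun c => (f ∘ σ) ((ψ g⁻¹)⁻¹⁻¹ * c) := by
      funext c
      simp only [Function.comp_apply, inv_inv, hσ]
    simpa only [hshift] using m_translate (ψ g⁻¹)⁻¹ _ (hf.comp σ)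
  · intro f hf
    have hsub : Set.range (f ∘ σ) ⊆ Set.range f := Set.range_comp_subset_range σ f
    have hne : (Set.range (f ∘ σ)).Nonempty := Set.range_nonempty _
    obtain ⟨hlo, hhi⟩ := m_bounds _ (hf.comp σ)
    exact ⟨(csInf_le_csInf hf.bddBelow hne hsub).trans hlo,
      hhi.trans (csSup_le_csSup hf.bddAbove hne hsub)⟩

theorem IsAmenable.of_injective {H C : Type*} [Group H] [Group C] (φ : H →* C)
    (hφ : Function.Injective φ) (hC : IsAmenable C) : IsAmenable H := by
  obtain ⟨T, hT, -⟩ := φ.range.exists_isComplement_right 1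
  let e := MonoidHom.ofInjective hφ
  refine hC.of_equivariant φ (fun c => e.symm (hT.equiv c).1) fun g c => ?_
  have hφg : φ g = (e g : C) := (MonoidHom.ofInjective_apply hφ).symm
  rw [hφg, hT.equiv_mul_left, map_mul, MulEquiv.symm_apply_apply]

/-- If every centraliser of an infinite-order element of `G` is
amenable, and `H₁`, `H₂` are elementwise-commuting subgroups of `G` with `H₁`
containing an element of infinite order, then `H₂` is amenable. -/
theorem commuting_subgroup_amenable_of_large
    {G : Type*} [Group G]
    (hcent : ∀ g : G, ¬ IsOfFinOrder g → IsAmenable (Subgroup.centralizer {g}))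
    (H₁ H₂ : Subgroup G)
    (hcomm : ∀ h₁ ∈ H₁, ∀ h₂ ∈ H₂, h₁ * h₂ = h₂ * h₁)
    (h1 : ∃ h ∈ H₁, ¬ IsOfFinOrder h) :
    IsAmenable H₂ := by
  obtain ⟨h, hh, hinf⟩ := h1
  have hle : H₂ ≤ Subgroup.centralizer {h} := fun x hx =>
    Subgroup.mem_centralizer_singleton_iff.mpr (hcomm h hh x hx).symm
  exact (hcent h hinf).of_injective (Subgroup.inclusion hle) (Subgroup.inclusion_injective hle)
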